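/- Let N ≥ 5 be an integer, let Ω ⊂ ℝ^N be a bounded open set containing 0, let δ > 0, and set σ := (N−2)/(2(N−3)) and α_N := (N(N−4)(N−2)(N+2))^{(N−4)/8}. Then there exist ε₀ > 0 and C > 0 such that for every ε ∈ (0, ε₀), every d ∈ [δ, 1/δ] and every τ ∈ ℝ^N with |τ| ≤ 1/δ, setting μ := d ε^σ and ξ := μτ, one has | ∫_{Ω \ closure(B(0,ε))} U_{μ,ξ}(x)^{2N/(N−4)} dx − α_N^{2N/(N−4)} ∫_{ℝ^N} (1 + |y|²)^{−N} dy | ≤ C ( (ε/μ)^N + μ^N ). -/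

import Mathlib

open scoped ENNReal
open MeasureTheory Filter Metric Set

noncomputable section

abbrev Euc (N : ℕ) := EuclideanSpace ℝ (Fin N)

/-- The Laplacian, defined pointwise as the sum of second derivatives along
the coordinate directions. -/
def lap {N : ℕ} (f : Euc N → ℝ) (x : Euc N) : ℝ :=
  ∑ i : Fin N, iteratedDeriv 2 (fun t : ℝ => f (x + t • EuclideanSpace.single i (1 : ℝ))) 0

/-- The bi-Laplacian `Δ²`. -/
def bilap {N : ℕ} (f : Euc N → ℝ) : Euc N → ℝ := lap (lap f)

/-- The normalizing constant `α_N = (N(N-4)(N-2)(N+2))^((N-4)/8)`. -/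
def alphaN (N : ℕ) : ℝ :=
  ((N : ℝ) * ((N : ℝ) - 4) * ((N : ℝ) - 2) * ((N : ℝ) + 2)) ^ (((N : ℝ) - 4) / 8)

/-- The critical exponent `p = (N+4)/(N-4)`. -/
def critExp (N : ℕ) : ℝ := ((N : ℝ) + 4) / ((N : ℝ) - 4)

/-- The concentration exponent `σ = (N-2)/(2(N-3))`. -/
def sigmaN (N : ℕ) : ℝ := ((N : ℝ) - 2) / (2 * ((N : ℝ) - 3))

/-- The standard bubble `U_{μ,ξ}(x) = α_N (μ/(μ² + |x-ξ|²))^((N-4)/2)`. -/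
def bubble (N : ℕ) (μ : ℝ) (ξ x : Euc N) : ℝ :=
  alphaN N * (μ / (μ ^ 2 + ‖x - ξ‖ ^ 2)) ^ (((N : ℝ) - 4) / 2)

/-- `P` solves the Navier problem `Δ²P = g` in `D`, `P = ΔP = 0` on `∂D`:
`P` is C⁴ on `D`, `Δ²P = g` pointwise in `D`, and `P` and `ΔP` extend continuously
to the closure of `D` with the extensions vanishing on the boundary. -/
def NavierSolves {N : ℕ} (D : Set (Euc N)) (P g : Euc N → ℝ) : Prop :=
  ContDiffOn ℝ 4 P D ∧ (∀ x ∈ D, bilap P x = g x) ∧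
    (∃ Pb : Euc N → ℝ, ContinuousOn Pb (closure D) ∧ (∀ x ∈ D, Pb x = P x) ∧
      ∀ x ∈ frontier D, Pb x = 0) ∧
    (∃ Qb : Euc N → ℝ, ContinuousOn Qb (closure D) ∧ (∀ x ∈ D, Qb x = lap P x) ∧
      ∀ x ∈ frontier D, Qb x = 0)

/-- `Ω` has smooth boundary: near every boundary point, `Ω` is the sublevel set of a
smooth function with nonvanishing differential. -/
def HasSmoothBoundary {N : ℕ} (Ω : Set (Euc N)) : Prop :=
  ∀ x ∈ frontier Ω, ∃ g : Euc N → ℝ, ContDiff ℝ (⊤ : ℕ∞) g ∧ fderiv ℝ g x ≠ 0 ∧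
    ∀ᶠ y in nhds x, (y ∈ Ω ↔ g y < 0)

/-! Substituting `x = μ y + ξ` turns the integral of `U_{μ,ξ}^{2N/(N-4)}` over `Ω \ B̄(0,ε)` into
`α_N^{2N/(N-4)}` times the integral of `(1 + |y|²)^{-N}` over the rescaled domain, so the error is
the integral of that function over the complement of the rescaled domain. That complement lies in
the union of the rescaled hole, a ball of radius `ε/μ` on which the integrand is at most `1`, and
the exterior of the ball of radius `r/(2μ)` (where `B(0,r) ⊆ Ω` and `|ξ| ≤ r/2`), whose
contribution is `O(μ^N)` by scaling. -/

open Module (finrank)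

section Integrals

variable {α : Type*} [MeasurableSpace α] {μ : Measure α} {f : α → ℝ}

theorem setIntegral_le_add_of_subset_union (hf : Integrable f μ) (hf0 : 0 ≤ f)
    {s t₁ t₂ : Set α} (h : s ⊆ t₁ ∪ t₂) :
    ∫ x in s, f x ∂μ ≤ ∫ x in t₁, f x ∂μ + ∫ x in t₂, f x ∂μ := by
  rw [← integral_add_measure hf.integrableOn hf.integrableOn]
  exact integral_mono_measure
    ((Measure.restrict_mono h le_rfl).trans (Measure.restrict_union_le _ _))
    (ae_of_all _ hf0) (hf.restrict.add_measure hf.restrict)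

theorem abs_setIntegral_sub_integral_of_nonneg (hf : Integrable f μ) (hf0 : 0 ≤ f) {s : Set α}
    (hs : MeasurableSet s) : |∫ x in s, f x ∂μ - ∫ x, f x ∂μ| = ∫ x in sᶜ, f x ∂μ := by
  rw [← integral_add_compl hs hf, sub_add_cancel_left, abs_neg,
    abs_of_nonneg (setIntegral_nonneg hs.compl fun x _ => hf0 x)]

end Integrals

section Haar

variable {E F : Type*} [NormedAddCommGroup E] [NormedSpace ℝ E] [FiniteDimensional ℝ E]
  [MeasurableSpace E] [BorelSpace E] (μ : Measure E) [μ.IsAddHaarMeasure]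
  [NormedAddCommGroup F] [NormedSpace ℝ F]

theorem setIntegral_comp_inv_smul_sub {c : ℝ} (hc : 0 < c) (g : E → F) (v : E) {s : Set E}
    (hs : MeasurableSet s) :
    ∫ x in s, g (c⁻¹ • (x - v)) ∂μ =
      c ^ finrank ℝ E • ∫ y in (fun y => c • y + v) ⁻¹' s, g y ∂μ := by
  have hindicator : ∀ y, s.indicator (fun x => g (c⁻¹ • (x - v))) (c • y + v) =
      ((fun y => c • y + v) ⁻¹' s).indicator g y := by
    intro y
    simp only [Set.indicator, Set.mem_preimage, add_sub_cancel_right, inv_smul_smul₀ hc.ne']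
    rfl
  rw [← integral_indicator hs, ← integral_indicator (hs.preimage (by fun_prop)),
    ← integral_add_right_eq_self _ v]
  simp_rw [← hindicator]
  rw [Measure.integral_comp_smul_of_nonneg μ (fun x => s.indicator _ (x + v)) c (hR := hc.le),
    smul_smul, mul_inv_cancel₀ (pow_pos hc _).ne', one_smul]

end Haar

section JapaneseBracketPointwise

variable {E : Type*} [NormedAddCommGroup E] [NormedSpace ℝ E] {s : ℝ}

theorem one_add_norm_sq_rpow_neg_smul_le (hs : 0 ≤ s) {R : ℝ} (hR : 0 < R) {z : E}
    (hz : 1 ≤ ‖z‖) :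
    (1 + ‖R • z‖ ^ 2) ^ (-s) ≤ (R ^ 2 / 2) ^ (-s) * (1 + ‖z‖ ^ 2) ^ (-s) := by
  rw [← Real.mul_rpow (by positivity) (by positivity)]
  refine Real.rpow_le_rpow_of_nonpos (by positivity) ?_ (neg_nonpos.2 hs)
  rw [norm_smul, Real.norm_eq_abs, abs_of_pos hR]
  nlinarith [mul_le_mul_of_nonneg_left (one_le_pow₀ hz : 1 ≤ ‖z‖ ^ 2) (sq_nonneg R)]

end JapaneseBracketPointwise

section JapaneseBracket

variable {E : Type*} [NormedAddCommGroup E] [NormedSpace ℝ E] [FiniteDimensional ℝ E]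
  [MeasurableSpace E] [BorelSpace E] (μ : Measure E) [μ.IsAddHaarMeasure] {s : ℝ}

theorem integrable_one_add_norm_sq_rpow_neg (hs : (finrank ℝ E : ℝ) < 2 * s) :
    Integrable (fun y : E => (1 + ‖y‖ ^ 2) ^ (-s)) μ := by
  simpa [neg_div] using integrable_rpow_neg_one_add_norm_sq (μ := μ) hs

theorem setIntegral_compl_ball_one_add_norm_sq_rpow_neg_le (hs : (finrank ℝ E : ℝ) < 2 * s)
    {R : ℝ} (hR : 0 < R) :
    ∫ y in (ball 0 R)ᶜ, (1 + ‖y‖ ^ 2) ^ (-s) ∂μ ≤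
      2 ^ s * R ^ ((finrank ℝ E : ℝ) - 2 * s) * ∫ y, (1 + ‖y‖ ^ 2) ^ (-s) ∂μ := by
  have hs0 : 0 ≤ s := by linarith [(finrank ℝ E).cast_nonneg (α := ℝ)]
  have hf := integrable_one_add_norm_sq_rpow_neg μ hs
  have hpre : (fun y : E => R • y + 0) ⁻¹' (ball 0 R)ᶜ = (ball 0 1)ᶜ := by
    ext y
    simp [norm_smul, abs_of_pos hR, hR]
  have hconst : R ^ finrank ℝ E * (R ^ 2 / 2) ^ (-s) = 2 ^ s * R ^ ((finrank ℝ E : ℝ) - 2 * s) := by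
    rw [Real.rpow_sub hR, Real.rpow_natCast, Real.div_rpow (by positivity) zero_le_two,
      Real.rpow_neg (by positivity), Real.rpow_neg zero_le_two, ← Real.rpow_natCast R 2,
      ← Real.rpow_mul hR.le]
    push_cast
    field_simp
  calc ∫ y in (ball 0 R)ᶜ, (1 + ‖y‖ ^ 2) ^ (-s) ∂μ
      = R ^ finrank ℝ E * ∫ z in (ball 0 1)ᶜ, (1 + ‖R • z‖ ^ 2) ^ (-s) ∂μ := by
        rw [← hpre, ← smul_eq_mul, ← setIntegral_comp_inv_smul_sub μ hR
          (fun z => (1 + ‖R • z‖ ^ 2) ^ (-s)) 0 measurableSet_ball.compl]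
        simp [smul_inv_smul₀ hR.ne']
    _ ≤ R ^ finrank ℝ E * ∫ z in (ball 0 1)ᶜ, (R ^ 2 / 2) ^ (-s) * (1 + ‖z‖ ^ 2) ^ (-s) ∂μ := by
        refine mul_le_mul_of_nonneg_left (setIntegral_mono_on (hf.comp_smul hR.ne').integrableOn
          (hf.const_mul _).integrableOn measurableSet_ball.compl fun z hz => ?_) (by positivity)
        exact one_add_norm_sq_rpow_neg_smul_le hs0 hR (by simpa using hz)
    _ ≤ R ^ finrank ℝ E * ((R ^ 2 / 2) ^ (-s) * ∫ z, (1 + ‖z‖ ^ 2) ^ (-s) ∂μ) := by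
        rw [integral_const_mul]
        gcongr ?_ * (?_ * ?_)
        exact setIntegral_le_integral hf (ae_of_all _ fun _ => by positivity)
    _ = 2 ^ s * R ^ ((finrank ℝ E : ℝ) - 2 * s) * ∫ y, (1 + ‖y‖ ^ 2) ^ (-s) ∂μ := by
        rw [← mul_assoc, hconst]

theorem setIntegral_closedBall_one_add_norm_sq_rpow_neg_le (hs : 0 ≤ s) (c : E) {r : ℝ}
    (hr : 0 ≤ r) :
    ∫ y in closedBall c r, (1 + ‖y‖ ^ 2) ^ (-s) ∂μ ≤ r ^ finrank ℝ E * μ.real (ball 0 1) := by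
  have hle : ∀ y ∈ closedBall c r, ‖(1 + ‖y‖ ^ 2) ^ (-s)‖ ≤ 1 := fun y _ => by
    rw [Real.norm_of_nonneg (by positivity)]
    exact Real.rpow_le_one_of_one_le_of_nonpos (by nlinarith [sq_nonneg ‖y‖]) (neg_nonpos.2 hs)
  have := norm_setIntegral_le_of_norm_le_const (μ := μ) measure_closedBall_lt_top hle
  rw [one_mul, Measure.addHaar_real_closedBall μ c hr] at this
  exact (le_abs_self _).trans this

end JapaneseBracket

section Rescaling

variable {E : Type*} [NormedAddCommGroup E] [NormedSpace ℝ E]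

theorem preimage_sdiff_closedBall_compl_subset {Ω : Set E} {r μ ε : ℝ} (hball : ball 0 r ⊆ Ω)
    (hμ : 0 < μ) {ξ : E} (hξ : ‖ξ‖ ≤ r / 2) :
    ((fun y => μ • y + ξ) ⁻¹' (Ω \ closedBall 0 ε))ᶜ ⊆
      (ball 0 (r / (2 * μ)))ᶜ ∪ closedBall (-(μ⁻¹ • ξ)) (ε / μ) := by
  intro y hy
  by_cases hyR : y ∈ ball 0 (r / (2 * μ))
  · right
    rw [mem_ball_zero_iff] at hyR
    have hmem : μ • y + ξ ∈ Ω := hball <| mem_ball_zero_iff.2 <|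
      calc ‖μ • y + ξ‖ ≤ μ * ‖y‖ + ‖ξ‖ := by
            rw [← norm_smul_of_nonneg hμ.le]; exact norm_add_le _ _
        _ < μ * (r / (2 * μ)) + r / 2 := add_lt_add_of_lt_of_le (by gcongr) hξ
        _ = r := by field_simp; ring
    have hyε : ‖μ • y + ξ‖ ≤ ε := by simpa [hmem] using hy
    rw [mem_closedBall, dist_eq_norm, sub_neg_eq_add, le_div_iff₀ hμ, mul_comm,
      ← norm_smul_of_nonneg hμ.le, smul_add, smul_inv_smul₀ hμ.ne']
    exact hyε
  · exact Or.inl hyR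

theorem norm_mul_rpow_smul_le {σ δ ρ ε d : ℝ} (hσ : 0 < σ) (hδ : 0 < δ) (hρ : 0 ≤ ρ) (hε : 0 < ε)
    (hε₀ : ε < (δ ^ 2 * ρ) ^ σ⁻¹) (hd : d ∈ Set.Icc δ (1 / δ)) {τ : E} (hτ : ‖τ‖ ≤ 1 / δ) :
    ‖(d * ε ^ σ) • τ‖ ≤ ρ := by
  have hεσ : ε ^ σ < δ ^ 2 * ρ := by
    simpa [Real.rpow_inv_rpow (by positivity : 0 ≤ δ ^ 2 * ρ) hσ.ne'] using
      Real.rpow_lt_rpow hε.le hε₀ hσ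
  have hd0 : 0 ≤ d := hδ.le.trans hd.1
  calc ‖(d * ε ^ σ) • τ‖ = d * ε ^ σ * ‖τ‖ := norm_smul_of_nonneg (by positivity) τ
    _ ≤ 1 / δ * ε ^ σ * (1 / δ) := by gcongr; exact hd.2
    _ ≤ ρ := by
      rw [div_mul_eq_mul_div, one_mul, div_mul_div_comm, div_le_iff₀ (by positivity)]
      nlinarith

end Rescaling

section Bubble

variable {N : ℕ}

theorem alphaN_pos (hN : 4 < N) : 0 < alphaN N := by
  have hN' : (4 : ℝ) < N := by exact_mod_cast hN
  exact Real.rpow_pos_of_pos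
    (mul_pos (mul_pos (mul_pos (by linarith) (by linarith)) (by linarith)) (by linarith)) _

theorem sigmaN_pos (hN : 3 < N) : 0 < sigmaN N := by
  have : (3 : ℝ) < N := by exact_mod_cast hN
  exact div_pos (by linarith) (by linarith)

theorem bubble_rpow_critical (hN : 4 < N) {μ : ℝ} (hμ : 0 < μ) (ξ x : Euc N) :
    bubble N μ ξ x ^ (2 * (N : ℝ) / ((N : ℝ) - 4)) =
      alphaN N ^ (2 * (N : ℝ) / ((N : ℝ) - 4)) *
        ((μ ^ N)⁻¹ * (1 + ‖μ⁻¹ • (x - ξ)‖ ^ 2) ^ (-(N : ℝ))) := by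
  have hN' : (N : ℝ) - 4 ≠ 0 := by
    have : (4 : ℝ) < N := by exact_mod_cast hN
    linarith
  have hexp : ((N : ℝ) - 4) / 2 * (2 * (N : ℝ) / ((N : ℝ) - 4)) = N := by
    field_simp
  have hbase : μ / (μ ^ 2 + ‖x - ξ‖ ^ 2) = (μ * (1 + ‖μ⁻¹ • (x - ξ)‖ ^ 2))⁻¹ := by
    rw [norm_smul, Real.norm_of_nonneg (inv_nonneg.2 hμ.le)]
    field_simp
  rw [bubble, hbase, Real.mul_rpow (alphaN_pos hN).le (by positivity),
    ← Real.rpow_mul (by positivity), hexp, Real.inv_rpow (by positivity),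
    Real.mul_rpow hμ.le (by positivity), Real.rpow_natCast, mul_inv, Real.rpow_neg (by positivity)]

theorem setIntegral_bubble_rpow_critical (hN : 4 < N) {μ : ℝ} (hμ : 0 < μ) (ξ : Euc N)
    {S : Set (Euc N)} (hS : MeasurableSet S) :
    ∫ x in S, bubble N μ ξ x ^ (2 * (N : ℝ) / ((N : ℝ) - 4)) =
      alphaN N ^ (2 * (N : ℝ) / ((N : ℝ) - 4)) *
        ∫ y in (fun y => μ • y + ξ) ⁻¹' S, (1 + ‖y‖ ^ 2) ^ (-(N : ℝ)) := by
  simp_rw [bubble_rpow_critical hN hμ]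
  rw [integral_const_mul, integral_const_mul,
    setIntegral_comp_inv_smul_sub volume hμ (fun y => (1 + ‖y‖ ^ 2) ^ (-(N : ℝ))) ξ hS,
    finrank_euclideanSpace_fin, smul_eq_mul, inv_mul_cancel_left₀ (pow_pos hμ N).ne']

theorem abs_setIntegral_bubble_rpow_critical_sub_le (hN : 4 < N) {Ω : Set (Euc N)}
    (hΩ : MeasurableSet Ω) {r : ℝ} (hr : 0 < r) (hball : ball 0 r ⊆ Ω) {μ ε : ℝ} (hμ : 0 < μ)
    (hε : 0 ≤ ε) {ξ : Euc N} (hξ : ‖ξ‖ ≤ r / 2) :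
    |(∫ x in Ω \ closedBall 0 ε, bubble N μ ξ x ^ (2 * (N : ℝ) / ((N : ℝ) - 4))) -
        alphaN N ^ (2 * (N : ℝ) / ((N : ℝ) - 4)) * ∫ y : Euc N, (1 + ‖y‖ ^ 2) ^ (-(N : ℝ))| ≤
      alphaN N ^ (2 * (N : ℝ) / ((N : ℝ) - 4)) *
        ((4 / r) ^ N * (∫ y : Euc N, (1 + ‖y‖ ^ 2) ^ (-(N : ℝ))) * μ ^ N +
          volume.real (ball (0 : Euc N) 1) * (ε / μ) ^ N) := by
  have hN2 : (finrank ℝ (Euc N) : ℝ) < 2 * N := by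
    have : (0 : ℝ) < N := by exact_mod_cast (by omega : 0 < N)
    rw [finrank_euclideanSpace_fin]
    linarith
  have hA : 0 < alphaN N ^ (2 * (N : ℝ) / ((N : ℝ) - 4)) := Real.rpow_pos_of_pos (alphaN_pos hN) _
  have hf := integrable_one_add_norm_sq_rpow_neg volume hN2
  have hf0 : 0 ≤ fun y : Euc N => (1 + ‖y‖ ^ 2) ^ (-(N : ℝ)) := fun y => by positivity
  have hS : MeasurableSet (Ω \ closedBall 0 ε) := hΩ.diff measurableSet_closedBall
  have hcover := preimage_sdiff_closedBall_compl_subset hball hμ hξ (ε := ε)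
  have htail := setIntegral_compl_ball_one_add_norm_sq_rpow_neg_le volume hN2
    (div_pos hr (mul_pos two_pos hμ))
  have hcore := setIntegral_closedBall_one_add_norm_sq_rpow_neg_le volume N.cast_nonneg
    (-(μ⁻¹ • ξ)) (div_nonneg hε hμ.le)
  rw [finrank_euclideanSpace_fin] at htail hcore
  rw [setIntegral_bubble_rpow_critical hN hμ ξ hS, ← mul_sub, abs_mul,
    abs_of_pos hA, abs_setIntegral_sub_integral_of_nonneg hf hf0 (hS.preimage (by fun_prop))]
  refine mul_le_mul_of_nonneg_left ((setIntegral_le_add_of_subset_union hf hf0 hcover).trans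
    (add_le_add (htail.trans_eq ?_) (hcore.trans_eq (mul_comm _ _)))) hA.le
  rw [show (N : ℝ) - 2 * N = -(N : ℝ) by ring, Real.rpow_neg (by positivity), Real.rpow_natCast,
    Real.rpow_natCast, ← inv_pow, inv_div, ← mul_pow, mul_right_comm, ← mul_pow]
  ring

end Bubble

theorem statement15_general (N : ℕ) (hN : 5 ≤ N) (Ω : Set (Euc N)) (hΩo : IsOpen Ω)
    (h0 : (0 : Euc N) ∈ Ω) (δ : ℝ) (hδ : 0 < δ) :
    ∃ ε₀ C : ℝ, 0 < ε₀ ∧ 0 < C ∧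
      ∀ ε d : ℝ, ∀ τ : Euc N, 0 < ε → ε < ε₀ → d ∈ Set.Icc δ (1 / δ) → ‖τ‖ ≤ 1 / δ →
      ∀ μ : ℝ, μ = d * ε ^ sigmaN N → ∀ ξ : Euc N, ξ = μ • τ →
        |(∫ x in Ω \ Metric.closedBall 0 ε, bubble N μ ξ x ^ (2 * (N : ℝ) / ((N : ℝ) - 4))) -
            alphaN N ^ (2 * (N : ℝ) / ((N : ℝ) - 4)) *
              ∫ y : Euc N, (1 + ‖y‖ ^ 2) ^ (-(N : ℝ))| ≤
          C * ((ε / μ) ^ (N : ℝ) + μ ^ (N : ℝ)) := by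
  obtain ⟨r, hr, hball⟩ := Metric.isOpen_iff.1 hΩo 0 h0
  set A := alphaN N ^ (2 * (N : ℝ) / ((N : ℝ) - 4)) with hA_def
  set I := ∫ y : Euc N, (1 + ‖y‖ ^ 2) ^ (-(N : ℝ)) with hI_def
  set V := volume.real (ball (0 : Euc N) 1) with hV_def
  have hA : 0 < A := Real.rpow_pos_of_pos (alphaN_pos (by omega)) _
  have hI : 0 ≤ I := integral_nonneg fun y => by positivity
  have hV : 0 < V := ENNReal.toReal_pos (measure_ball_pos _ _ one_pos).ne' measure_ball_lt_top.ne
  refine ⟨(δ ^ 2 * (r / 2)) ^ (sigmaN N)⁻¹, A * ((4 / r) ^ N * I + V), by positivity,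
    by positivity, ?_⟩
  rintro ε d τ hε hε₀ hd hτ μ rfl ξ rfl
  have hμ : 0 < d * ε ^ sigmaN N := mul_pos (hδ.trans_le hd.1) (by positivity)
  refine (abs_setIntegral_bubble_rpow_critical_sub_le (by omega) hΩo.measurableSet hr hball hμ
    hε.le (norm_mul_rpow_smul_le (sigmaN_pos (by omega)) hδ (by positivity) hε hε₀ hd hτ)).trans ?_
  rw [← hA_def, ← hI_def, ← hV_def, Real.rpow_natCast, Real.rpow_natCast]
  have hq : 0 ≤ (ε / (d * ε ^ sigmaN N)) ^ N := by positivity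
  have hm : 0 ≤ (d * ε ^ sigmaN N) ^ N := by positivity
  have hX : 0 ≤ (4 / r) ^ N * I := by positivity
  nlinarith [mul_nonneg (mul_nonneg hA.le hX) hq, mul_nonneg (mul_nonneg hA.le hV.le) hm]

theorem statement15 (N : ℕ) (hN : 5 ≤ N) (Ω : Set (Euc N)) (hΩo : IsOpen Ω)
    (hΩb : Bornology.IsBounded Ω) (h0 : (0 : Euc N) ∈ Ω) (δ : ℝ) (hδ : 0 < δ) :
    ∃ ε₀ C : ℝ, 0 < ε₀ ∧ 0 < C ∧
      ∀ ε d : ℝ, ∀ τ : Euc N, 0 < ε → ε < ε₀ → d ∈ Set.Icc δ (1 / δ) → ‖τ‖ ≤ 1 / δ →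
      ∀ μ : ℝ, μ = d * ε ^ sigmaN N → ∀ ξ : Euc N, ξ = μ • τ →
        |(∫ x in Ω \ Metric.closedBall 0 ε, bubble N μ ξ x ^ (2 * (N : ℝ) / ((N : ℝ) - 4))) -
            alphaN N ^ (2 * (N : ℝ) / ((N : ℝ) - 4)) *
              ∫ y : Euc N, (1 + ‖y‖ ^ 2) ^ (-(N : ℝ))| ≤
          C * ((ε / μ) ^ (N : ℝ) + μ ^ (N : ℝ)) :=
  statement15_general N hN Ω hΩo h0 δ hδ
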